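/- For u ∈ ℂ, u ≠ 0, and D ∈ {1, −1}, define 4×4 complex matrices A = [[1, −(D⁻²+D⁻¹+1), (D⁻²+D⁻¹+1)u, −u], [0, −1, (D⁻¹+1)u, −u], [0, 0, u, −u], [0, 0, 0, −u]] and B = [[−u, 0, 0, 0], [−u, u, 0, 0], [−D, D+1, −1, 0], [−D³, D³+D²+D, −D²−D−1, 1]], and define p₁(u,t) = u²t⁴ + (u+u²+u³)t³ + (1+2u+2u²+2u³+u⁴)t² + (u+u²+u³)t + u². Then A and B are invertible, and the characteristic polynomial of A·B⁻¹ in the variable t equals p₁(u,t)/u² if D = −1, and equals p₁(−u,t)/u² if D = 1. -/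

import Mathlib

/-- The `A` matrix of the 4-dimensional Tuba–Wenzl representation, normalized with
eigenvalues `{±u, ±1}`. -/
noncomputable def twA (u D : ℂ) : Matrix (Fin 4) (Fin 4) ℂ :=
  !![1, -(D⁻¹ ^ 2 + D⁻¹ + 1), (D⁻¹ ^ 2 + D⁻¹ + 1) * u, -u;
     0, -1, (D⁻¹ + 1) * u, -u;
     0, 0, u, -u;
     0, 0, 0, -u]

/-- The `B` matrix of the 4-dimensional Tuba–Wenzl representation. -/
def twB (u D : ℂ) : Matrix (Fin 4) (Fin 4) ℂ :=
  !![-u, 0, 0, 0;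
     -u, u, 0, 0;
     -D, D + 1, -1, 0;
     -D ^ 3, D ^ 3 + D ^ 2 + D, -D ^ 2 - D - 1, 1]

/-- The subgroup of `GL(4, ℂ)` generated by the (invertible) matrices `A` and `B`. -/
def matGenGroup (A B : Matrix (Fin 4) (Fin 4) ℂ) :
    Subgroup (Matrix (Fin 4) (Fin 4) ℂ)ˣ :=
  Subgroup.closure {g : (Matrix (Fin 4) (Fin 4) ℂ)ˣ |
    (g : Matrix (Fin 4) (Fin 4) ℂ) = A ∨ (g : Matrix (Fin 4) (Fin 4) ℂ) = B}

/-- The polynomial `p₁(u, t)` from Rowell–Tuba. -/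
def p₁ (u t : ℂ) : ℂ :=
  u ^ 2 * t ^ 4 + (u + u ^ 2 + u ^ 3) * t ^ 3 +
    (1 + 2 * u + 2 * u ^ 2 + 2 * u ^ 3 + u ^ 4) * t ^ 2 + (u + u ^ 2 + u ^ 3) * t + u ^ 2

/-!
For invertible `B`, `det (t - A B⁻¹) = det (t B - A) / det B`, so the characteristic polynomial of
`A B⁻¹` is the determinant of the pencil `t B - A` divided by `det B = u ^ 2`. For `D = ±1` the
pencil determinant is `p₁ (-D u) t`, by direct expansion.
-/

theorem Matrix.eval_charpoly_mul_inv {n K : Type*} [Fintype n] [DecidableEq n] [Field K]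
    (A B : Matrix n n K) (hB : B.det ≠ 0) (t : K) :
    (A * B⁻¹).charpoly.eval t = (t • B - A).det / B.det := by
  rw [Matrix.eval_charpoly, eq_div_iff hB, ← Matrix.det_mul, sub_mul,
    Matrix.nonsing_inv_mul_cancel_right _ _ hB.isUnit, Matrix.scalar_apply,
    ← Matrix.smul_eq_diagonal_mul]

theorem det_twA (u D : ℂ) : (twA u D).det = u ^ 2 := by
  rw [twA]
  eval_det

theorem det_twB (u D : ℂ) : (twB u D).det = u ^ 2 := by
  rw [twB]
  eval_det

theorem det_smul_twB_sub_twA (u t : ℂ) {D : ℂ} (hD : D = 1 ∨ D = -1) :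
    (t • twB u D - twA u D).det = p₁ (-(D * u)) t := by
  rw [twA, twB, Matrix.smul_of, Matrix.of_sub_of]
  simp only [Matrix.smul_cons, Matrix.cons_sub_cons, Matrix.smul_empty, Matrix.empty_sub_empty]
  rcases hD with rfl | rfl <;>
  · eval_det
    simp only [p₁]
    ring

theorem stmt7_general (u D : ℂ) (hu : u ≠ 0) :
    IsUnit (twA u D) ∧ IsUnit (twB u D) ∧
      (D = -1 → ∀ t : ℂ,
        Polynomial.eval t (twA u D * (twB u D)⁻¹).charpoly = p₁ u t / u ^ 2) ∧
      (D = 1 → ∀ t : ℂ,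
        Polynomial.eval t (twA u D * (twB u D)⁻¹).charpoly = p₁ (-u) t / u ^ 2) := by
  have hdet : u ^ 2 ≠ 0 := pow_ne_zero 2 hu
  have hB : (twB u D).det ≠ 0 := det_twB u D ▸ hdet
  refine ⟨?_, ?_, ?_, ?_⟩
  · rw [Matrix.isUnit_iff_isUnit_det, det_twA]
    exact hdet.isUnit
  · exact (Matrix.isUnit_iff_isUnit_det _).mpr hB.isUnit
  · rintro rfl t
    rw [Matrix.eval_charpoly_mul_inv _ _ hB, det_twB, det_smul_twB_sub_twA u t (Or.inr rfl),
      neg_one_mul, neg_neg]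
  · rintro rfl t
    rw [Matrix.eval_charpoly_mul_inv _ _ hB, det_twB, det_smul_twB_sub_twA u t (Or.inl rfl), one_mul]

theorem stmt7 (u D : ℂ) (hu : u ≠ 0) (hD : D = 1 ∨ D = -1) :
    IsUnit (twA u D) ∧ IsUnit (twB u D) ∧
      (D = -1 → ∀ t : ℂ,
        Polynomial.eval t (twA u D * (twB u D)⁻¹).charpoly = p₁ u t / u ^ 2) ∧
      (D = 1 → ∀ t : ℂ,
        Polynomial.eval t (twA u D * (twB u D)⁻¹).charpoly = p₁ (-u) t / u ^ 2) :=
  stmt7_general u D hu
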